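/- arXiv:2302.02256 — 5 statements merged into one kernel-verified Lean document; each statement's English description precedes it below -/
import Mathlib

section
/- Let ζ₁, ζ₂, χ, κ, ν be real numbers and 0 < R < 1. Define E(v₁,v₂,u₁,u₂) = ½v₂² + ½R u₂² − R v₂ u₂ sin u₁ + ½χ² v₁² + Rκ²(1 − cos u₁). Then for all (v₁,v₂,u₁,u₂) ∈ ℝ⁴, ℒE(v₁,v₂,u₁,u₂) = −2ζ₁ v₂² − 2Rζ₂ u₂² + ν²/(2(1 − R sin² u₁)). -/
/-- The generator `ℒ` of the block-and-pendulum stochastic system, acting on a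
twice continuously differentiable function `G : ℝ⁴ → ℝ` of `(v₁, v₂, u₁, u₂)`. -/
noncomputable def genL (ζ₁ ζ₂ χ κ ν R : ℝ) (G : ℝ → ℝ → ℝ → ℝ → ℝ)
    (v₁ v₂ u₁ u₂ : ℝ) : ℝ :=
  v₂ * deriv (fun x => G x v₂ u₁ u₂) v₁
    + ((-(2 * ζ₁ * v₂) - χ ^ 2 * v₁ + R * u₂ ^ 2 * Real.cos u₁
          - 2 * R * ζ₂ * u₂ * Real.sin u₁ - R * κ ^ 2 * Real.sin u₁ ^ 2)
        / (1 - R * Real.sin u₁ ^ 2))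
      * deriv (fun x => G v₁ x u₁ u₂) v₂
    + u₂ * deriv (fun x => G v₁ v₂ x u₂) u₁
    + ((-(2 * ζ₂ * u₂) - κ ^ 2 * Real.sin u₁ - 2 * ζ₁ * v₂ * Real.sin u₁
          - χ ^ 2 * v₁ * Real.sin u₁ + R * u₂ ^ 2 * Real.sin u₁ * Real.cos u₁)
        / (1 - R * Real.sin u₁ ^ 2))
      * deriv (fun x => G v₁ v₂ u₁ x) u₂
    + (ν ^ 2 / (2 * (1 - R * Real.sin u₁ ^ 2) ^ 2))
      * (deriv (fun x => deriv (fun y => G v₁ y u₁ u₂) x) v₂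
          + 2 * Real.sin u₁ * deriv (fun x => deriv (fun y => G v₁ x u₁ y) u₂) v₂
          + Real.sin u₁ ^ 2 * deriv (fun x => deriv (fun y => G v₁ v₂ u₁ y) x) u₂)

/-!
Along the noise-free flow the energy `E` is conserved up to damping: in the first-order part of
`ℒE` the gradient `(∂E/∂v₂, ∂E/∂u₂) = (v₂ - R u₂ sin u₁, R (u₂ - v₂ sin u₁))` pairs with the
accelerations so that the common denominator `1 - R sin² u₁` cancels, leaving only the dissipation
`-2ζ₁v₂² - 2Rζ₂u₂²`. In the second-order part the Hessian of `E` in `(v₂, u₂)`,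
`[[1, -R sin u₁], [-R sin u₁, R]]`, evaluated on the noise direction `(1, sin u₁)` equals
`1 - R sin² u₁`, which cancels one of the two factors of the denominator of the diffusion coefficient.
-/

open Real

noncomputable def pendulumEnergy (χ κ R v₁ v₂ u₁ u₂ : ℝ) : ℝ :=
  (1 / 2) * v₂ ^ 2 + (1 / 2) * R * u₂ ^ 2 - R * v₂ * u₂ * sin u₁
    + (1 / 2) * χ ^ 2 * v₁ ^ 2 + R * κ ^ 2 * (1 - cos u₁)

theorem one_sub_mul_sin_sq_pos {R : ℝ} (hR : R < 1) (x : ℝ) : 0 < 1 - R * sin x ^ 2 := by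
  rcases le_or_gt 0 R with hR0 | hR0
  · nlinarith [sin_sq_le_one x]
  · nlinarith [sq_nonneg (sin x)]

section PartialDerivatives

variable (χ κ R v₁ v₂ u₁ u₂ : ℝ)

theorem deriv_pendulumEnergy_v₁ :
    deriv (fun x => pendulumEnergy χ κ R x v₂ u₁ u₂) v₁ = χ ^ 2 * v₁ := by
  simp (disch := fun_prop) [pendulumEnergy]
  ring

theorem deriv_pendulumEnergy_v₂ :
    deriv (fun x => pendulumEnergy χ κ R v₁ x u₁ u₂) v₂ = v₂ - R * u₂ * sin u₁ := by
  simp (disch := fun_prop) [pendulumEnergy]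
  ring

theorem deriv_pendulumEnergy_u₁ :
    deriv (fun x => pendulumEnergy χ κ R v₁ v₂ x u₂) u₁
      = R * κ ^ 2 * sin u₁ - R * v₂ * u₂ * cos u₁ := by
  simp (disch := fun_prop) [pendulumEnergy]
  ring

theorem deriv_pendulumEnergy_u₂ :
    deriv (fun x => pendulumEnergy χ κ R v₁ v₂ u₁ x) u₂ = R * u₂ - R * v₂ * sin u₁ := by
  simp (disch := fun_prop) [pendulumEnergy]
  ring

theorem deriv_deriv_pendulumEnergy_v₂_v₂ :
    deriv (fun x => deriv (fun y => pendulumEnergy χ κ R v₁ y u₁ u₂) x) v₂ = 1 := by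
  simp only [deriv_pendulumEnergy_v₂]
  simp (disch := fun_prop)

theorem deriv_deriv_pendulumEnergy_v₂_u₂ :
    deriv (fun x => deriv (fun y => pendulumEnergy χ κ R v₁ x u₁ y) u₂) v₂ = -(R * sin u₁) := by
  simp only [deriv_pendulumEnergy_u₂]
  simp (disch := fun_prop)

theorem deriv_deriv_pendulumEnergy_u₂_u₂ :
    deriv (fun x => deriv (fun y => pendulumEnergy χ κ R v₁ v₂ u₁ y) x) u₂ = R := by
  simp only [deriv_pendulumEnergy_u₂]
  simp (disch := fun_prop)

end PartialDerivatives

theorem genL_energy_general (ζ₁ ζ₂ χ κ ν R : ℝ) (hR1 : R < 1) :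
    ∀ v₁ v₂ u₁ u₂ : ℝ,
      genL ζ₁ ζ₂ χ κ ν R
        (fun v₁ v₂ u₁ u₂ =>
          (1 / 2) * v₂ ^ 2 + (1 / 2) * R * u₂ ^ 2 - R * v₂ * u₂ * Real.sin u₁
            + (1 / 2) * χ ^ 2 * v₁ ^ 2 + R * κ ^ 2 * (1 - Real.cos u₁))
        v₁ v₂ u₁ u₂
      = -(2 * ζ₁ * v₂ ^ 2) - 2 * R * ζ₂ * u₂ ^ 2
          + ν ^ 2 / (2 * (1 - R * Real.sin u₁ ^ 2)) := by
  intro v₁ v₂ u₁ u₂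
  change genL ζ₁ ζ₂ χ κ ν R (pendulumEnergy χ κ R) v₁ v₂ u₁ u₂ = _
  have hD := (one_sub_mul_sin_sq_pos hR1 u₁).ne'
  rw [genL, deriv_pendulumEnergy_v₁, deriv_pendulumEnergy_v₂, deriv_pendulumEnergy_u₁,
    deriv_pendulumEnergy_u₂, deriv_deriv_pendulumEnergy_v₂_v₂,
    deriv_deriv_pendulumEnergy_v₂_u₂, deriv_deriv_pendulumEnergy_u₂_u₂]
  field_simp
  ring

/-- For the energy function `E`, one has
`ℒE = −2ζ₁v₂² − 2Rζ₂u₂² + ν²/(2(1 − R sin² u₁))`. -/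
theorem genL_energy (ζ₁ ζ₂ χ κ ν R : ℝ) (hR0 : 0 < R) (hR1 : R < 1) :
    ∀ v₁ v₂ u₁ u₂ : ℝ,
      genL ζ₁ ζ₂ χ κ ν R
        (fun v₁ v₂ u₁ u₂ =>
          (1 / 2) * v₂ ^ 2 + (1 / 2) * R * u₂ ^ 2 - R * v₂ * u₂ * Real.sin u₁
            + (1 / 2) * χ ^ 2 * v₁ ^ 2 + R * κ ^ 2 * (1 - Real.cos u₁))
        v₁ v₂ u₁ u₂
      = -(2 * ζ₁ * v₂ ^ 2) - 2 * R * ζ₂ * u₂ ^ 2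
          + ν ^ 2 / (2 * (1 - R * Real.sin u₁ ^ 2)) :=
  genL_energy_general ζ₁ ζ₂ χ κ ν R hR1
end

section
/- Let ζ₁ > 0, ζ₂ > 0, χ > 0, κ > 0, ν > 0 and 0 < R < 1. There exist α > 0 and positive constants c₁, c₂, c₃, c₄, c₅ such that the function F(v₁,v₂,u₁,u₂) = E(v₁,v₂,u₁,u₂) + α·v₁(v₂ − R u₂ sin u₁) satisfies, for all (v₁,v₂,u₁,u₂) ∈ ℝ⁴: (a) c₁(v₁² + v₂² + u₂²) ≤ F(v₁,v₂,u₁,u₂) ≤ c₂ + c₃(v₁² + v₂² + u₂²), and (b) ℒF(v₁,v₂,u₁,u₂) ≤ c₄ − c₅(v₁² + v₂² + u₂²). -/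
open Real

theorem abs_mul_sin_le_one {R : ℝ} (hR0 : 0 ≤ R) (hR1 : R ≤ 1) (u : ℝ) : |R * sin u| ≤ 1 := by
  rw [abs_mul, abs_of_nonneg hR0]
  exact mul_le_one₀ hR1 (abs_nonneg _) (abs_sin_le_one u)

theorem one_sub_le_one_sub_mul_sin_sq {R : ℝ} (hR0 : 0 ≤ R) (u : ℝ) :
    1 - R ≤ 1 - R * sin u ^ 2 := by
  nlinarith [sin_sq_le_one u]

theorem sq_mul_le_sq_of_abs_le_one {t : ℝ} (ht : |t| ≤ 1) (x : ℝ) : (t * x) ^ 2 ≤ x ^ 2 := by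
  rw [mul_pow]
  exact mul_le_of_le_one_left (sq_nonneg x) (sq_le_one_iff_abs_le_one t |>.mpr ht)

theorem two_mul_mul_mul_le_of_abs_le_one {t : ℝ} (ht : |t| ≤ 1) (x y : ℝ) :
    2 * t * x * y ≤ x ^ 2 + y ^ 2 := by
  nlinarith [two_mul_le_add_sq (t * x) y, sq_mul_le_sq_of_abs_le_one ht x]

theorem add_mul_sq_le_of_abs_le_one {t : ℝ} (ht : |t| ≤ 1) (x y : ℝ) :
    (x + t * y) ^ 2 ≤ 2 * x ^ 2 + 2 * y ^ 2 := by
  nlinarith [two_mul_le_add_sq x (t * y), sq_mul_le_sq_of_abs_le_one ht y]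

theorem min_min_mul_add_add_le {x y z : ℝ} (hx : 0 ≤ x) (hy : 0 ≤ y) (hz : 0 ≤ z) (a b c : ℝ) :
    min a (min b c) * (x + y + z) ≤ a * x + b * y + c * z := by
  have ha := mul_le_mul_of_nonneg_right (min_le_left a (min b c)) hx
  have hb := mul_le_mul_of_nonneg_right ((min_le_right a _).trans (min_le_left b c)) hy
  have hc := mul_le_mul_of_nonneg_right ((min_le_right a _).trans (min_le_right b c)) hz
  linarith

noncomputable def energy (R χ κ v₁ v₂ u₁ u₂ : ℝ) : ℝ :=
  (1 / 2) * v₂ ^ 2 + (1 / 2) * R * u₂ ^ 2 - R * v₂ * u₂ * sin u₁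
    + (1 / 2) * χ ^ 2 * v₁ ^ 2 + R * κ ^ 2 * (1 - cos u₁)

noncomputable def lyapunovFn (R χ κ α v₁ v₂ u₁ u₂ : ℝ) : ℝ :=
  energy R χ κ v₁ v₂ u₁ u₂ + α * (v₁ * (v₂ - R * u₂ * sin u₁))

section
variable {R χ κ α : ℝ} (v₁ v₂ u₁ u₂ : ℝ)

theorem lyapunovFn_eq : lyapunovFn R χ κ α v₁ v₂ u₁ u₂
    = (1 / 2) * (v₂ - R * u₂ * sin u₁) ^ 2 + (1 / 2) * R * (1 - R * sin u₁ ^ 2) * u₂ ^ 2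
      + (1 / 2) * χ ^ 2 * v₁ ^ 2 + R * κ ^ 2 * (1 - cos u₁) + α * v₁ * (v₂ - R * u₂ * sin u₁) := by
  unfold lyapunovFn energy; ring

theorem lyapunovFn_lower_bound (hR0 : 0 ≤ R) (hR1 : R ≤ 1) (hα0 : 0 ≤ α) (hα1 : α ≤ 1 / 2)
    (hαχ : α ≤ χ ^ 2 / 2) :
    min (χ ^ 2 / 4) (R * (1 - R) / 8) * (v₁ ^ 2 + v₂ ^ 2 + u₂ ^ 2) ≤ lyapunovFn R χ κ α v₁ v₂ u₁ u₂ := by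
  rw [lyapunovFn_eq]
  set p := v₂ - R * u₂ * sin u₁
  have hcross : -(α / 2 * (v₁ ^ 2 + p ^ 2)) ≤ α * v₁ * p := by
    nlinarith [two_mul_le_add_sq (-v₁) p]
  have hkin : R * (1 - R) * u₂ ^ 2 ≤ R * (1 - R * sin u₁ ^ 2) * u₂ ^ 2 :=
    mul_le_mul_of_nonneg_right
      (mul_le_mul_of_nonneg_left (one_sub_le_one_sub_mul_sin_sq hR0 u₁) hR0) (sq_nonneg _)
  have hv₂ : v₂ ^ 2 ≤ 2 * p ^ 2 + 2 * u₂ ^ 2 := by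
    have := add_mul_sq_le_of_abs_le_one (abs_mul_sin_le_one hR0 hR1 u₁) p u₂
    rwa [show p + R * sin u₁ * u₂ = v₂ by ring] at this
  have hR0' : 0 ≤ R * (1 - R) := mul_nonneg hR0 (by linarith)
  have hR1' : R * (1 - R) ≤ 1 := by nlinarith
  have hmin := min_min_mul_add_add_le (sq_nonneg v₁) (sq_nonneg v₂) (sq_nonneg u₂)
    (χ ^ 2 / 4) (R * (1 - R) / 8) (R * (1 - R) / 8)
  rw [min_self] at hmin
  nlinarith [mul_nonneg (mul_nonneg hR0 (sq_nonneg κ)) (sub_nonneg.mpr (cos_le_one u₁)), mul_le_mul_of_nonneg_right hα1 (sq_nonneg p),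
    mul_le_mul_of_nonneg_right hαχ (sq_nonneg v₁), mul_le_mul_of_nonneg_left hv₂ hR0',
    mul_le_mul_of_nonneg_right hR1' (sq_nonneg p)]

theorem lyapunovFn_upper_bound (hR0 : 0 ≤ R) (hR1 : R ≤ 1) (hα0 : 0 ≤ α) :
    lyapunovFn R χ κ α v₁ v₂ u₁ u₂ ≤ 2 * R * κ ^ 2 + (1 + χ ^ 2 + α) * (v₁ ^ 2 + v₂ ^ 2 + u₂ ^ 2) := by
  have hRs := abs_mul_sin_le_one hR0 hR1 u₁
  have hpot : R * κ ^ 2 * (1 - cos u₁) ≤ 2 * R * κ ^ 2 := by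
    have := neg_one_le_cos u₁
    nlinarith [mul_nonneg hR0 (sq_nonneg κ)]
  have hcross : α * (v₁ * (v₂ - R * u₂ * sin u₁)) ≤ α / 2 * (v₁ ^ 2 + 2 * v₂ ^ 2 + 2 * u₂ ^ 2) := by
    have hp := add_mul_sq_le_of_abs_le_one (abs_neg (R * sin u₁) ▸ hRs) v₂ u₂
    nlinarith [two_mul_le_add_sq v₁ (v₂ - R * u₂ * sin u₁)]
  have hkin := two_mul_mul_mul_le_of_abs_le_one (abs_neg (R * sin u₁) ▸ hRs) v₂ u₂
  unfold lyapunovFn energy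
  nlinarith [sq_nonneg v₁, sq_nonneg v₂, sq_nonneg u₂, mul_nonneg hα0 (sq_nonneg v₁),
    mul_nonneg hα0 (sq_nonneg v₂), mul_nonneg hα0 (sq_nonneg u₂), mul_nonneg (sq_nonneg χ) (sq_nonneg v₁)]

theorem deriv_lyapunovFn_v₁ :
    deriv (fun x => lyapunovFn R χ κ α x v₂ u₁ u₂) v₁ = χ ^ 2 * v₁ + α * (v₂ - R * u₂ * sin u₁) := by
  simp (disch := fun_prop) only [lyapunovFn, energy, deriv_fun_add, deriv_fun_sub, deriv_fun_mul,
    deriv_fun_pow, deriv_const', deriv_id'']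
  ring

theorem deriv_lyapunovFn_v₂ :
    deriv (fun x => lyapunovFn R χ κ α v₁ x u₁ u₂) v₂ = v₂ - R * u₂ * sin u₁ + α * v₁ := by
  simp (disch := fun_prop) only [lyapunovFn, energy, deriv_fun_add, deriv_fun_sub, deriv_fun_mul,
    deriv_fun_pow, deriv_const', deriv_id'', deriv_const_mul_id']
  ring

theorem deriv_lyapunovFn_u₁ :
    deriv (fun x => lyapunovFn R χ κ α v₁ v₂ x u₂) u₁
      = R * κ ^ 2 * sin u₁ - R * u₂ * (v₂ + α * v₁) * cos u₁ := by
  simp (disch := fun_prop) only [lyapunovFn, energy, deriv_fun_add, deriv_fun_sub, deriv_fun_mul,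
    deriv_fun_pow, deriv_const', Real.deriv_sin, deriv_cos']
  ring

theorem deriv_lyapunovFn_u₂ :
    deriv (fun x => lyapunovFn R χ κ α v₁ v₂ u₁ x) u₂ = R * u₂ - R * (v₂ + α * v₁) * sin u₁ := by
  simp (disch := fun_prop) only [lyapunovFn, energy, deriv_fun_add, deriv_fun_sub, deriv_fun_mul,
    deriv_fun_pow, deriv_const', deriv_id'', deriv_const_mul_id']
  ring

variable {ζ₁ ζ₂ ν : ℝ}

theorem genL_lyapunovFn (hD : 1 - R * sin u₁ ^ 2 ≠ 0) :
    genL ζ₁ ζ₂ χ κ ν R (lyapunovFn R χ κ α) v₁ v₂ u₁ u₂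
      = -2 * ζ₁ * v₂ ^ 2 - 2 * R * ζ₂ * u₂ ^ 2 + ν ^ 2 / (2 * (1 - R * sin u₁ ^ 2))
        + α * (v₂ * (v₂ - R * u₂ * sin u₁) - 2 * ζ₁ * v₁ * v₂ - χ ^ 2 * v₁ ^ 2) := by
  simp only [genL, deriv_lyapunovFn_v₁, deriv_lyapunovFn_v₂, deriv_lyapunovFn_u₁,
    deriv_lyapunovFn_u₂]
  simp (disch := fun_prop) only [deriv_fun_add, deriv_fun_sub, deriv_fun_mul, deriv_const',
    deriv_id'', deriv_const_mul_id']
  field_simp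
  ring

theorem genL_lyapunovFn_le (hR0 : 0 ≤ R) (hR1 : R < 1) (hχ : 0 < χ) (hα0 : 0 ≤ α)
    (hαζ₁ : α ≤ 2 * ζ₁ * χ ^ 2 / (3 * χ ^ 2 + 4 * ζ₁ ^ 2)) (hαζ₂ : α ≤ 2 * R * ζ₂) :
    genL ζ₁ ζ₂ χ κ ν R (lyapunovFn R χ κ α) v₁ v₂ u₁ u₂
      ≤ ν ^ 2 / (2 * (1 - R)) - (α * χ ^ 2 / 2 * v₁ ^ 2 + ζ₁ * v₂ ^ 2 + R * ζ₂ * u₂ ^ 2) := by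
  have hsin := one_sub_le_one_sub_mul_sin_sq hR0 u₁
  rw [genL_lyapunovFn v₁ v₂ u₁ u₂ (by linarith)]
  have hdiff : ν ^ 2 / (2 * (1 - R * sin u₁ ^ 2)) ≤ ν ^ 2 / (2 * (1 - R)) := by gcongr
  have hRs := abs_mul_sin_le_one hR0 hR1.le u₁
  have hyoung₁ := two_mul_mul_mul_le_of_abs_le_one (abs_neg (R * sin u₁) ▸ hRs) v₂ u₂
  have hyoung₂ : -(4 * ζ₁ * χ ^ 2 * v₁ * v₂) ≤ χ ^ 4 * v₁ ^ 2 + 4 * ζ₁ ^ 2 * v₂ ^ 2 := by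
    nlinarith [sq_nonneg (χ ^ 2 * v₁ + 2 * ζ₁ * v₂)]
  have hχ2 : 0 < χ ^ 2 := by positivity
  -- After these, the coefficient of `v₂²` is `-2ζ₁ + α (3χ² + 4ζ₁²) / (2χ²) ≤ -ζ₁`
  -- and that of `u₂²` is `-2Rζ₂ + α / 2 ≤ -Rζ₂`.
  rw [le_div_iff₀ (by positivity)] at hαζ₁
  nlinarith [mul_le_mul_of_nonneg_left hyoung₁ (mul_nonneg hα0 hχ2.le),
    mul_le_mul_of_nonneg_left hyoung₂ hα0, mul_le_mul_of_nonneg_right hαζ₁ (sq_nonneg v₂),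
    mul_le_mul_of_nonneg_right hαζ₂ (mul_nonneg hχ2.le (sq_nonneg u₂)),
    mul_le_mul_of_nonneg_left hdiff hχ2.le]

end

/-- Lyapunov function estimates: there exist  and positive constants
 such that  satisfies
 and . -/
theorem lyapunov_estimates (ζ₁ ζ₂ χ κ ν R : ℝ)
    (hζ₁ : 0 < ζ₁) (hζ₂ : 0 < ζ₂) (hχ : 0 < χ) (hκ : 0 < κ) (hν : 0 < ν)
    (hR0 : 0 < R) (hR1 : R < 1) :
    ∃ α c₁ c₂ c₃ c₄ c₅ : ℝ, 0 < α ∧ 0 < c₁ ∧ 0 < c₂ ∧ 0 < c₃ ∧ 0 < c₄ ∧ 0 < c₅ ∧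
      ∀ v₁ v₂ u₁ u₂ : ℝ,
        (c₁ * (v₁ ^ 2 + v₂ ^ 2 + u₂ ^ 2)
            ≤ ((1 / 2) * v₂ ^ 2 + (1 / 2) * R * u₂ ^ 2 - R * v₂ * u₂ * Real.sin u₁
                + (1 / 2) * χ ^ 2 * v₁ ^ 2 + R * κ ^ 2 * (1 - Real.cos u₁))
              + α * (v₁ * (v₂ - R * u₂ * Real.sin u₁))
          ∧ ((1 / 2) * v₂ ^ 2 + (1 / 2) * R * u₂ ^ 2 - R * v₂ * u₂ * Real.sin u₁
                + (1 / 2) * χ ^ 2 * v₁ ^ 2 + R * κ ^ 2 * (1 - Real.cos u₁))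
              + α * (v₁ * (v₂ - R * u₂ * Real.sin u₁))
            ≤ c₂ + c₃ * (v₁ ^ 2 + v₂ ^ 2 + u₂ ^ 2))
        ∧ genL ζ₁ ζ₂ χ κ ν R
            (fun v₁ v₂ u₁ u₂ =>
              ((1 / 2) * v₂ ^ 2 + (1 / 2) * R * u₂ ^ 2 - R * v₂ * u₂ * Real.sin u₁
                  + (1 / 2) * χ ^ 2 * v₁ ^ 2 + R * κ ^ 2 * (1 - Real.cos u₁))
                + α * (v₁ * (v₂ - R * u₂ * Real.sin u₁)))
            v₁ v₂ u₁ u₂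
          ≤ c₄ - c₅ * (v₁ ^ 2 + v₂ ^ 2 + u₂ ^ 2) := by
  have h1R : 0 < 1 - R := sub_pos.mpr hR1
  set α := min (min (1 / 2) (χ ^ 2 / 2)) (min (2 * ζ₁ * χ ^ 2 / (3 * χ ^ 2 + 4 * ζ₁ ^ 2)) (2 * R * ζ₂))
  have hα : 0 < α := by positivity
  refine ⟨α, min (χ ^ 2 / 4) (R * (1 - R) / 8), 2 * R * κ ^ 2, 1 + χ ^ 2 + α, ν ^ 2 / (2 * (1 - R)),
    min (α * χ ^ 2 / 2) (min ζ₁ (R * ζ₂)), hα, lt_min (by positivity) (by positivity), by positivity,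
    by positivity, by positivity, lt_min (by positivity) (lt_min hζ₁ (by positivity)),
    fun v₁ v₂ u₁ u₂ => ⟨⟨?_, ?_⟩, ?_⟩⟩
  · exact lyapunovFn_lower_bound v₁ v₂ u₁ u₂ hR0.le hR1.le hα.le
      ((min_le_left _ _).trans (min_le_left _ _)) ((min_le_left _ _).trans (min_le_right _ _))
  · exact lyapunovFn_upper_bound v₁ v₂ u₁ u₂ hR0.le hR1.le hα.le
  · calc genL ζ₁ ζ₂ χ κ ν R (lyapunovFn R χ κ α) v₁ v₂ u₁ u₂
        ≤ ν ^ 2 / (2 * (1 - R)) - (α * χ ^ 2 / 2 * v₁ ^ 2 + ζ₁ * v₂ ^ 2 + R * ζ₂ * u₂ ^ 2) :=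
          genL_lyapunovFn_le v₁ v₂ u₁ u₂ hR0.le hR1 hχ hα.le
            ((min_le_right _ _).trans (min_le_left _ _)) ((min_le_right _ _).trans (min_le_right _ _))
      _ ≤ _ := sub_le_sub_left
          (min_min_mul_add_add_le (sq_nonneg v₁) (sq_nonneg v₂) (sq_nonneg u₂) _ _ _) _
end

section
/- Let ζ₁ > 0, ζ₂ > 0, χ > 0, κ > 0, ν > 0 and 0 < R < 1. There exist α > 0 and β₀ > 0 such that the function F(v₁,v₂,u₁,u₂) = E(v₁,v₂,u₁,u₂) + α·v₁(v₂ − R u₂ sin u₁) satisfies: for every γ > 0 there exists a constant c₆ such that ℒ(exp(β₀ F))(v₁,v₂,u₁,u₂) ≤ −γ exp(β₀ F(v₁,v₂,u₁,u₂)) + c₆ for all (v₁,v₂,u₁,u₂) ∈ ℝ⁴. -/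
/-!
Since `ℒ` is a second-order operator with diffusion only along `(1, sin u₁)` in `(v₂, u₂)`,
`ℒ e^{βF} = β e^{βF} (ℒF + (β/2) ν² (∂_{v₂}F + sin u₁ ∂_{u₂}F)² / (1 - R sin² u₁)²)`.
The energy only dissipates in `v₂` and `u₂`: `ℒE = -2ζ₁v₂² - 2Rζ₂u₂² + ν² / (2(1 - R sin² u₁))`.
The cross term `α v₁ (v₂ - R u₂ sin u₁)` adds `-αχ²v₁²` together with terms absorbed for small `α`,
and the noise term is absorbed for small `β`. Hence the bracket is at most
`C - δ (v₁² + v₂² + u₂²)`, while `F ≤ M (1 + v₁² + v₂² + u₂²)`: where `β · bracket ≥ -γ` the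
state stays in a region on which `e^{βF}` is bounded, and elsewhere `ℒ e^{βF} ≤ -γ e^{βF}`.
-/

open Real

section Calculus

variable {f f' : ℝ → ℝ} {f'' x : ℝ}

theorem hasDerivAt_quadratic {𝕜 : Type*} [NontriviallyNormedField 𝕜] (a b c x : 𝕜) :
    HasDerivAt (fun t => a * t ^ 2 + b * t + c) (2 * a * x + b) x := by
  refine ((((hasDerivAt_pow 2 x).const_mul a).add ((hasDerivAt_id' x).const_mul b)).add_const
    c).congr_deriv ?_
  push_cast
  ring

theorem deriv_deriv_exp (hf : ∀ t, HasDerivAt f (f' t) t) (hf' : HasDerivAt f' f'' x) :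
    deriv (fun t => deriv (fun s => exp (f s)) t) x = (f'' + f' x ^ 2) * exp (f x) := by
  have hd : (fun t => deriv (fun s => exp (f s)) t) = fun t => exp (f t) * f' t :=
    funext fun t => (hf t).exp.deriv
  rw [hd, ((hf x).exp.fun_mul hf').deriv]
  ring

theorem deriv_deriv_exp₂ {g : ℝ → ℝ → ℝ} {gy : ℝ → ℝ} {gx gxy x y : ℝ}
    (hy : ∀ x, HasDerivAt (g x) (gy x) y) (hxy : HasDerivAt gy gxy x)
    (hx : HasDerivAt (fun x => g x y) gx x) :
    deriv (fun x => deriv (fun y => exp (g x y)) y) x = (gxy + gy x * gx) * exp (g x y) := by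
  have hd : (fun x => deriv (fun y => exp (g x y)) y) = fun x => exp (g x y) * gy x :=
    funext fun x => (hy x).exp.deriv
  rw [hd, (hx.exp.fun_mul hxy).deriv]
  ring

end Calculus

noncomputable def lyapunovF (α χ κ R v₁ v₂ u₁ u₂ : ℝ) : ℝ :=
  pendulumEnergy χ κ R v₁ v₂ u₁ u₂ + α * (v₁ * (v₂ - R * u₂ * sin u₁))

/-- `ℒ F + (β / 2) ν² (∂_{v₂} F + sin u₁ ∂_{u₂} F)² / (1 - R sin² u₁)²`, using
`∂_{v₂} F + sin u₁ ∂_{u₂} F = (v₂ + α v₁) (1 - R sin² u₁)`. -/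
noncomputable def lyapunovDrift (ζ₁ ζ₂ χ ν R α β v₁ v₂ u₁ u₂ : ℝ) : ℝ :=
  -(2 * ζ₁ * v₂ ^ 2) - 2 * R * ζ₂ * u₂ ^ 2
    + α * (v₂ ^ 2 - R * v₂ * u₂ * sin u₁ - 2 * ζ₁ * v₁ * v₂ - χ ^ 2 * v₁ ^ 2)
    + ν ^ 2 / (2 * (1 - R * sin u₁ ^ 2)) + β * ν ^ 2 * (v₂ + α * v₁) ^ 2 / 2

section PartialDerivatives

variable (α χ κ R v₁ v₂ u₁ u₂ : ℝ)

theorem hasDerivAt_lyapunovF_v₁ :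
    HasDerivAt (fun x => lyapunovF α χ κ R x v₂ u₁ u₂)
      (χ ^ 2 * v₁ + α * (v₂ - R * u₂ * sin u₁)) v₁ := by
  have hF : (fun x => lyapunovF α χ κ R x v₂ u₁ u₂) = fun t =>
      χ ^ 2 / 2 * t ^ 2 + α * (v₂ - R * u₂ * sin u₁) * t + lyapunovF α χ κ R 0 v₂ u₁ u₂ := by
    funext t; simp only [lyapunovF, pendulumEnergy]; ring
  rw [hF]
  exact (hasDerivAt_quadratic _ _ _ _).congr_deriv (by ring)

theorem hasDerivAt_lyapunovF_v₂ :
    HasDerivAt (fun x => lyapunovF α χ κ R v₁ x u₁ u₂) (v₂ - R * u₂ * sin u₁ + α * v₁) v₂ := by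
  have hF : (fun x => lyapunovF α χ κ R v₁ x u₁ u₂) = fun t =>
      1 / 2 * t ^ 2 + (α * v₁ - R * u₂ * sin u₁) * t + lyapunovF α χ κ R v₁ 0 u₁ u₂ := by
    funext t; simp only [lyapunovF, pendulumEnergy]; ring
  rw [hF]
  exact (hasDerivAt_quadratic _ _ _ _).congr_deriv (by ring)

theorem hasDerivAt_lyapunovF_u₁ :
    HasDerivAt (fun x => lyapunovF α χ κ R v₁ v₂ x u₂)
      (R * κ ^ 2 * sin u₁ - R * (v₂ + α * v₁) * u₂ * cos u₁) u₁ := by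
  have hF : (fun x => lyapunovF α χ κ R v₁ v₂ x u₂) = fun t =>
      -(R * (v₂ + α * v₁) * u₂) * sin t + -(R * κ ^ 2) * cos t
        + ((1 / 2) * v₂ ^ 2 + (1 / 2) * R * u₂ ^ 2 + (1 / 2) * χ ^ 2 * v₁ ^ 2 + R * κ ^ 2
          + α * v₁ * v₂) := by
    funext t; simp only [lyapunovF, pendulumEnergy]; ring
  rw [hF]
  exact ((((hasDerivAt_sin u₁).const_mul _).fun_add ((hasDerivAt_cos u₁).const_mul _)).add_const
    _).congr_deriv (by ring)

theorem hasDerivAt_lyapunovF_u₂ :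
    HasDerivAt (fun x => lyapunovF α χ κ R v₁ v₂ u₁ x) (R * u₂ - R * (v₂ + α * v₁) * sin u₁) u₂ := by
  have hF : (fun x => lyapunovF α χ κ R v₁ v₂ u₁ x) = fun t =>
      R / 2 * t ^ 2 + -(R * (v₂ + α * v₁) * sin u₁) * t + lyapunovF α χ κ R v₁ v₂ u₁ 0 := by
    funext t; simp only [lyapunovF, pendulumEnergy]; ring
  rw [hF]
  exact (hasDerivAt_quadratic _ _ _ _).congr_deriv (by ring)

end PartialDerivatives

theorem genL_exp_lyapunovF (ζ₁ ζ₂ χ κ ν R α β v₁ v₂ u₁ u₂ : ℝ)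
    (hD : 1 - R * sin u₁ ^ 2 ≠ 0) :
    genL ζ₁ ζ₂ χ κ ν R (fun v₁ v₂ u₁ u₂ => exp (β * lyapunovF α χ κ R v₁ v₂ u₁ u₂)) v₁ v₂ u₁ u₂
      = β * exp (β * lyapunovF α χ κ R v₁ v₂ u₁ u₂)
          * lyapunovDrift ζ₁ ζ₂ χ ν R α β v₁ v₂ u₁ u₂ := by
  have hv₂ := fun x => (hasDerivAt_lyapunovF_v₂ α χ κ R v₁ x u₁ u₂).const_mul β
  have hu₂ := fun x y => (hasDerivAt_lyapunovF_u₂ α χ κ R v₁ x u₁ y).const_mul β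
  have hv₂v₂ : HasDerivAt (fun x => β * (x - R * u₂ * sin u₁ + α * v₁)) (β * 1) v₂ :=
    (((hasDerivAt_id' v₂).sub_const _).add_const _).const_mul β
  have hu₂u₂ : HasDerivAt (fun y => β * (R * y - R * (v₂ + α * v₁) * sin u₁)) (β * (R * 1)) u₂ :=
    (((hasDerivAt_id' u₂).const_mul R).sub_const _).const_mul β
  have hv₂u₂ : HasDerivAt (fun x => β * (R * u₂ - R * (x + α * v₁) * sin u₁))
      (β * -(R * 1 * sin u₁)) v₂ :=
    (((((hasDerivAt_id' v₂).add_const _).const_mul R).mul_const _).const_sub _).const_mul β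
  simp only [genL]
  rw [((hasDerivAt_lyapunovF_v₁ α χ κ R v₁ v₂ u₁ u₂).const_mul β).exp.deriv,
    (hv₂ v₂).exp.deriv,
    ((hasDerivAt_lyapunovF_u₁ α χ κ R v₁ v₂ u₁ u₂).const_mul β).exp.deriv,
    (hu₂ v₂ u₂).exp.deriv, deriv_deriv_exp hv₂ hv₂v₂,
    deriv_deriv_exp₂ (fun x => hu₂ x u₂) hv₂u₂ (hv₂ v₂),
    deriv_deriv_exp (hu₂ v₂) hu₂u₂]
  simp only [lyapunovDrift]
  field_simp
  ring

theorem lyapunovDrift_le {ζ₁ ζ₂ χ ν R α β : ℝ} (hζ₁ : 0 < ζ₁) (hR0 : 0 ≤ R) (hR1 : R < 1)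
    (hα : 0 ≤ α) (hαζ₂ : α ≤ 2 * ζ₂) (hαζ₁ : 4 * α ≤ ζ₁) (hαχ : 8 * ζ₁ * α ≤ χ ^ 2)
    (hβ : 0 ≤ β) (hβν : 2 * ν ^ 2 * β ≤ ζ₁) (v₁ v₂ u₁ u₂ : ℝ) :
    lyapunovDrift ζ₁ ζ₂ χ ν R α β v₁ v₂ u₁ u₂
      ≤ ν ^ 2 / (2 * (1 - R))
        - min (α * χ ^ 2 / 2) (min (ζ₁ / 2) (R * ζ₂)) * (v₁ ^ 2 + v₂ ^ 2 + u₂ ^ 2) := by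
  have hmin : min (α * χ ^ 2 / 2) (min (ζ₁ / 2) (R * ζ₂)) * (v₁ ^ 2 + v₂ ^ 2 + u₂ ^ 2)
      ≤ α * χ ^ 2 / 2 * v₁ ^ 2 + ζ₁ / 2 * v₂ ^ 2 + R * ζ₂ * u₂ ^ 2 := by
    have h₁ := min_le_left (α * χ ^ 2 / 2) (min (ζ₁ / 2) (R * ζ₂))
    have h₂ := (min_le_right (α * χ ^ 2 / 2) _).trans (min_le_left (ζ₁ / 2) (R * ζ₂))
    have h₃ := (min_le_right (α * χ ^ 2 / 2) _).trans (min_le_right (ζ₁ / 2) (R * ζ₂))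
    nlinarith [sq_nonneg v₁, sq_nonneg v₂, sq_nonneg u₂]
  have hdiff : ν ^ 2 / (2 * (1 - R * sin u₁ ^ 2)) ≤ ν ^ 2 / (2 * (1 - R)) :=
    div_le_div_of_nonneg_left (sq_nonneg ν) (by linarith)
      (by linarith [mul_le_of_le_one_right hR0 (sin_sq_le_one u₁)])
  have hs := sin_sq_le_one u₁
  simp only [lyapunovDrift]
  -- Young's inequality on the cross terms `v₂ u₂ sin u₁`, `v₁ v₂` and inside `(v₂ + α v₁)²`
  linarith [mul_nonneg (mul_nonneg hα hR0) (sq_nonneg (v₂ + u₂ * sin u₁)),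
    mul_nonneg (mul_nonneg hα hR0) (mul_nonneg (sq_nonneg u₂) (sub_nonneg.2 hs)),
    mul_nonneg hζ₁.le (sq_nonneg (v₂ + 2 * α * v₁)),
    mul_nonneg (mul_nonneg hβ (sq_nonneg ν)) (sq_nonneg (v₂ - α * v₁)),
    mul_nonneg (sub_nonneg.2 hβν) (sq_nonneg v₂),
    mul_nonneg (sub_nonneg.2 hβν) (sq_nonneg (α * v₁)),
    mul_nonneg (sub_nonneg.2 hαχ) (mul_nonneg hα (sq_nonneg v₁)),
    mul_nonneg (sub_nonneg.2 hαζ₁) (sq_nonneg v₂),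
    mul_nonneg (mul_nonneg hα (sub_nonneg.2 hR1.le)) (sq_nonneg v₂),
    mul_nonneg (mul_nonneg hR0 (sub_nonneg.2 hαζ₂)) (sq_nonneg u₂),
    mul_nonneg hζ₁.le (sq_nonneg v₂), mul_nonneg (mul_nonneg hα (sq_nonneg χ)) (sq_nonneg v₁)]

theorem lyapunovF_le {α χ κ R : ℝ} (hα : 0 ≤ α) (hR0 : 0 ≤ R) (hR1 : R ≤ 1) (v₁ v₂ u₁ u₂ : ℝ) :
    lyapunovF α χ κ R v₁ v₂ u₁ u₂
      ≤ (1 + α + χ ^ 2 + 2 * κ ^ 2) * (1 + (v₁ ^ 2 + v₂ ^ 2 + u₂ ^ 2)) := by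
  have hs := sin_sq_le_one u₁
  have hc := neg_one_le_cos u₁
  simp only [lyapunovF, pendulumEnergy]
  nlinarith [mul_nonneg hR0 (sq_nonneg (v₂ + u₂ * sin u₁)),
    mul_nonneg hR0 (mul_nonneg (sq_nonneg u₂) (sub_nonneg.2 hs)),
    mul_nonneg hα (sq_nonneg (v₁ - v₂)),
    mul_nonneg (mul_nonneg hα hR0) (sq_nonneg (v₁ + u₂ * sin u₁)),
    mul_nonneg (mul_nonneg hα hR0) (mul_nonneg (sq_nonneg u₂) (sub_nonneg.2 hs)),
    mul_nonneg (mul_nonneg hR0 (sq_nonneg κ)) (by linarith : (0:ℝ) ≤ 1 + cos u₁),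
    mul_nonneg (sub_nonneg.2 hR1) (sq_nonneg κ),
    mul_nonneg (sub_nonneg.2 hR1) (sq_nonneg u₂),
    mul_nonneg (mul_nonneg hα (sub_nonneg.2 hR1)) (sq_nonneg u₂),
    mul_nonneg hα (sq_nonneg v₁), mul_nonneg hα (sq_nonneg v₂), sq_nonneg χ,
    mul_nonneg (sq_nonneg χ) (sq_nonneg v₁)]

theorem exp_mul_le_of_le_sub {a W q C d M : ℝ} (hq : 0 ≤ q) (hd : 0 < d) (hC : 0 ≤ C)
    (hM : 0 ≤ M) (ha : a ≤ C - d * q) (hW : W ≤ M * (1 + q)) :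
    exp W * a ≤ exp (M * (1 + C / d)) * C := by
  rcases le_total a 0 with ha0 | ha0
  · exact (mul_nonpos_of_nonneg_of_nonpos (exp_pos W).le ha0).trans
      (mul_nonneg (exp_pos _).le hC)
  have hqC : q ≤ C / d := by rw [le_div_iff₀ hd]; nlinarith
  have hWC : W ≤ M * (1 + C / d) := hW.trans (by gcongr)
  exact mul_le_mul (exp_le_exp.2 hWC) (by nlinarith) ha0 (exp_pos _).le

theorem exists_genL_exp_lyapunovF_le {ζ₁ ζ₂ χ κ ν R α β C δ M : ℝ} (hR1 : R < 1) (hβ : 0 < β)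
    (hδ : 0 < δ) (hC : 0 ≤ C) (hM : 0 ≤ M)
    (hdrift : ∀ v₁ v₂ u₁ u₂, lyapunovDrift ζ₁ ζ₂ χ ν R α β v₁ v₂ u₁ u₂
      ≤ C - δ * (v₁ ^ 2 + v₂ ^ 2 + u₂ ^ 2))
    (hgrowth : ∀ v₁ v₂ u₁ u₂, lyapunovF α χ κ R v₁ v₂ u₁ u₂ ≤ M * (1 + (v₁ ^ 2 + v₂ ^ 2 + u₂ ^ 2)))
    {γ : ℝ} (hγ : 0 < γ) :
    ∃ c : ℝ, ∀ v₁ v₂ u₁ u₂ : ℝ,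
      genL ζ₁ ζ₂ χ κ ν R (fun v₁ v₂ u₁ u₂ => exp (β * lyapunovF α χ κ R v₁ v₂ u₁ u₂)) v₁ v₂ u₁ u₂
        ≤ -γ * exp (β * lyapunovF α χ κ R v₁ v₂ u₁ u₂) + c := by
  refine ⟨exp (β * M * (1 + (γ + β * C) / (β * δ))) * (γ + β * C), fun v₁ v₂ u₁ u₂ => ?_⟩
  rw [genL_exp_lyapunovF _ _ _ _ _ _ _ _ _ _ _ _ (one_sub_mul_sin_sq_pos hR1 u₁).ne']
  have key := exp_mul_le_of_le_sub (a := β * lyapunovDrift ζ₁ ζ₂ χ ν R α β v₁ v₂ u₁ u₂ + γ)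
    (W := β * lyapunovF α χ κ R v₁ v₂ u₁ u₂) (q := v₁ ^ 2 + v₂ ^ 2 + u₂ ^ 2)
    (C := γ + β * C) (d := β * δ) (M := β * M) (by positivity) (mul_pos hβ hδ) (by positivity)
    (mul_nonneg hβ.le hM)
    (by nlinarith [hdrift v₁ v₂ u₁ u₂])
    (by rw [mul_assoc]; exact mul_le_mul_of_nonneg_left (hgrowth v₁ v₂ u₁ u₂) hβ.le)
  linarith

theorem lyapunov_exp_estimate_general (ζ₁ ζ₂ χ κ ν R : ℝ)
    (hζ₁ : 0 < ζ₁) (hζ₂ : 0 < ζ₂) (hχ : 0 < χ) (hν : 0 < ν)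
    (hR0 : 0 < R) (hR1 : R < 1) :
    ∃ α β₀ : ℝ, 0 < α ∧ 0 < β₀ ∧
      ∀ γ : ℝ, 0 < γ → ∃ c₆ : ℝ,
        ∀ v₁ v₂ u₁ u₂ : ℝ,
          genL ζ₁ ζ₂ χ κ ν R
            (fun v₁ v₂ u₁ u₂ =>
              Real.exp (β₀ *
                (((1 / 2) * v₂ ^ 2 + (1 / 2) * R * u₂ ^ 2 - R * v₂ * u₂ * Real.sin u₁
                    + (1 / 2) * χ ^ 2 * v₁ ^ 2 + R * κ ^ 2 * (1 - Real.cos u₁))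
                  + α * (v₁ * (v₂ - R * u₂ * Real.sin u₁)))))
            v₁ v₂ u₁ u₂
          ≤ -γ * Real.exp (β₀ *
                (((1 / 2) * v₂ ^ 2 + (1 / 2) * R * u₂ ^ 2 - R * v₂ * u₂ * Real.sin u₁
                    + (1 / 2) * χ ^ 2 * v₁ ^ 2 + R * κ ^ 2 * (1 - Real.cos u₁))
                  + α * (v₁ * (v₂ - R * u₂ * Real.sin u₁)))) + c₆ := by
  set α := min (2 * ζ₂) (min (ζ₁ / 4) (χ ^ 2 / (8 * ζ₁)))
  set β := ζ₁ / (2 * ν ^ 2)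
  have hα : 0 < α := lt_min (by positivity) (lt_min (by positivity) (by positivity))
  have hβ : 0 < β := by positivity
  have hαζ₁ : 4 * α ≤ ζ₁ := by
    linarith [((min_le_right _ _).trans (min_le_left _ _) : α ≤ ζ₁ / 4)]
  have hαχ : 8 * ζ₁ * α ≤ χ ^ 2 := by
    have : α ≤ χ ^ 2 / (8 * ζ₁) := (min_le_right _ _).trans (min_le_right _ _)
    rwa [le_div_iff₀ (by positivity), mul_comm] at this
  have hβν : 2 * ν ^ 2 * β ≤ ζ₁ := by rw [mul_div_cancel₀ _ (by positivity)]
  have hδ : 0 < min (α * χ ^ 2 / 2) (min (ζ₁ / 2) (R * ζ₂)) :=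
    lt_min (by positivity) (lt_min (by positivity) (by positivity))
  have hC : 0 ≤ ν ^ 2 / (2 * (1 - R)) := div_nonneg (sq_nonneg ν) (by linarith)
  refine ⟨α, β, hα, hβ, fun γ hγ => exists_genL_exp_lyapunovF_le hR1 hβ hδ hC
    (by positivity : 0 ≤ 1 + α + χ ^ 2 + 2 * κ ^ 2)
    (lyapunovDrift_le hζ₁ hR0.le hR1 hα.le (min_le_left _ _) hαζ₁ hαχ hβ.le hβν)
    (lyapunovF_le hα.le hR0.le hR1.le) hγ⟩

/-- Exponential Lyapunov function estimate: there exist  and 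
such that for every  there is a constant  with
, where . -/
theorem lyapunov_exp_estimate (ζ₁ ζ₂ χ κ ν R : ℝ)
    (hζ₁ : 0 < ζ₁) (hζ₂ : 0 < ζ₂) (hχ : 0 < χ) (hκ : 0 < κ) (hν : 0 < ν)
    (hR0 : 0 < R) (hR1 : R < 1) :
    ∃ α β₀ : ℝ, 0 < α ∧ 0 < β₀ ∧
      ∀ γ : ℝ, 0 < γ → ∃ c₆ : ℝ,
        ∀ v₁ v₂ u₁ u₂ : ℝ,
          genL ζ₁ ζ₂ χ κ ν R
            (fun v₁ v₂ u₁ u₂ =>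
              Real.exp (β₀ *
                (((1 / 2) * v₂ ^ 2 + (1 / 2) * R * u₂ ^ 2 - R * v₂ * u₂ * Real.sin u₁
                    + (1 / 2) * χ ^ 2 * v₁ ^ 2 + R * κ ^ 2 * (1 - Real.cos u₁))
                  + α * (v₁ * (v₂ - R * u₂ * Real.sin u₁)))))
            v₁ v₂ u₁ u₂
          ≤ -γ * Real.exp (β₀ *
                (((1 / 2) * v₂ ^ 2 + (1 / 2) * R * u₂ ^ 2 - R * v₂ * u₂ * Real.sin u₁
                    + (1 / 2) * χ ^ 2 * v₁ ^ 2 + R * κ ^ 2 * (1 - Real.cos u₁))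
                  + α * (v₁ * (v₂ - R * u₂ * Real.sin u₁)))) + c₆ :=
  lyapunov_exp_estimate_general ζ₁ ζ₂ χ κ ν R hζ₁ hζ₂ hχ hν hR0 hR1
end

section
/- Let A be a real d×d Hurwitz matrix (all eigenvalues of A have strictly negative real part) and B a real d×m matrix. Then the integral R = ∫₀^∞ e^{tA} B Bᵀ e^{tAᵀ} dt converges, and R satisfies the Lyapunov equation A R + R Aᵀ = −B Bᵀ. -/
open MeasureTheory
open scoped Matrix

/-- The controllability Gramian `R = ∫₀^∞ e^{tA} B Bᵀ e^{tAᵀ} dt`, defined entrywise. -/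
noncomputable def gramian {d m : ℕ} (A : Matrix (Fin d) (Fin d) ℝ)
    (B : Matrix (Fin d) (Fin m) ℝ) : Matrix (Fin d) (Fin d) ℝ :=
  Matrix.of fun i j => ∫ t in Set.Ioi (0 : ℝ),
    (NormedSpace.exp (t • A) * B * Bᵀ * NormedSpace.exp (t • Aᵀ)) i j

/-!
Over `ℂ`, every eigenvalue of `exp M` is `exp μ` for an eigenvalue `μ` of `M`: the commuting
pair `M`, `exp M` has a common eigenvector. For a Hurwitz matrix `A` the spectral radius of
`exp A` is therefore `< 1`, so Gelfand's formula gives `‖(exp A)ⁿ‖ = O(ρⁿ)` for some `ρ < 1`,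
and `‖exp (t • A)‖ = O(e^{-εt})`. The integrand `G t = e^{tA} B Bᵀ e^{tAᵀ}` then decays
exponentially, and since `G' = A G + G Aᵀ`, integrating over `(0, ∞)` gives
`A R + R Aᵀ = G ∞ - G 0 = -B Bᵀ`.
-/

open NormedSpace Filter Asymptotics Topology Set
open scoped NNReal

theorem Module.End.exists_hasEigenvector_of_commute {K V : Type*} [Field K] [IsAlgClosed K]
    [AddCommGroup V] [Module K V] [FiniteDimensional K V] {f g : Module.End K V}
    (hfg : Commute f g) {μ : K} (hμ : g.HasEigenvalue μ) :
    ∃ ν v, f.HasEigenvector ν v ∧ g.HasEigenvector μ v := by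
  have hmaps : MapsTo f (g.eigenspace μ) (g.eigenspace μ) :=
    g.mapsTo_genEigenspace_of_comm hfg.symm μ 1
  have : Nontrivial (g.eigenspace μ) := Submodule.nontrivial_iff_ne_bot.mpr hμ
  obtain ⟨ν, hν⟩ := Module.End.exists_eigenvalue (f.restrict hmaps)
  obtain ⟨w, hw⟩ := hν.exists_hasEigenvector
  have hw0 : (w : V) ≠ 0 := by simpa using hw.2
  refine ⟨ν, w, ⟨?_, hw0⟩, w.2, hw0⟩
  rw [Module.End.mem_eigenspace_iff]
  exact congrArg Subtype.val hw.apply_eq_smul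

section BanachAlgebra

variable {𝔸 : Type*} [NormedRing 𝔸] [NormedAlgebra ℂ 𝔸] [CompleteSpace 𝔸]

theorem isBigO_pow_of_spectralRadius_lt {a : 𝔸} {r : ℝ≥0} (h : spectralRadius ℂ a < r) :
    (fun n : ℕ => a ^ n) =O[atTop] fun n => (r : ℝ) ^ n := by
  have hgelfand := spectrum.pow_nnnorm_pow_one_div_tendsto_nhds_spectralRadius a
  refine IsBigO.of_bound 1 ?_
  filter_upwards [hgelfand.eventually_lt_const h, eventually_gt_atTop 0] with n hn hn0
  have hpow := ENNReal.rpow_lt_rpow hn (by positivity : (0 : ℝ) < n)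
  rw [← ENNReal.rpow_mul, one_div_mul_cancel (by positivity), ENNReal.rpow_one,
    ENNReal.rpow_natCast, ← ENNReal.coe_pow, ENNReal.coe_lt_coe] at hpow
  rw [one_mul, Real.norm_of_nonneg (by positivity)]
  exact_mod_cast hpow.le

theorem exp_natCast_add_smul (a : 𝔸) (n : ℕ) (s : ℂ) :
    exp ((n + s) • a) = exp a ^ n * exp (s • a) := by
  let := NormedAlgebra.restrictScalars ℚ ℂ 𝔸
  rw [add_smul, exp_add_of_commute (((Commute.refl a).smul_left _).smul_right _),
    Nat.cast_smul_eq_nsmul, exp_nsmul]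

theorem isBigO_exp_smul_of_spectralRadius_exp_lt_one {a : 𝔸}
    (h : spectralRadius ℂ (exp a) < 1) :
    ∃ ε > 0, (fun t : ℝ => exp ((t : ℂ) • a)) =O[atTop] fun t => Real.exp (-ε * t) := by
  let := NormedAlgebra.restrictScalars ℚ ℂ 𝔸
  obtain ⟨r, hr, hr1⟩ := ENNReal.lt_iff_exists_nnreal_btwn.mp h
  have hr0 : (0 : ℝ) < r := by exact_mod_cast pos_of_gt hr
  have hrlt1 : (r : ℝ) < 1 := by exact_mod_cast hr1
  refine ⟨-Real.log r, neg_pos.mpr (Real.log_neg hr0 hrlt1), ?_⟩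
  have hpow : (fun t : ℝ => exp a ^ ⌊t⌋₊) =O[atTop] fun t => (r : ℝ) ^ ⌊t⌋₊ :=
    (isBigO_pow_of_spectralRadius_lt hr).comp_tendsto
      tendsto_nat_floor_atTop
  have hfract : (fun t : ℝ => exp (((t - ⌊t⌋₊ : ℝ) : ℂ) • a)) =O[atTop] fun _ => (1 : ℝ) := by
    obtain ⟨C, hC⟩ := isCompact_Icc.exists_bound_of_continuousOn
      (exp_continuous.comp (Complex.continuous_ofReal.smul continuous_const)).continuousOn
      (s := Icc (0 : ℝ) 1) (E := 𝔸)
    refine IsBigO.of_bound C ?_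
    filter_upwards [eventually_ge_atTop 0] with t ht
    simpa using hC _ ⟨sub_nonneg.mpr (Nat.floor_le ht), by linarith [Nat.lt_floor_add_one t]⟩
  have hgeom : (fun t : ℝ => (r : ℝ) ^ ⌊t⌋₊ * 1) =O[atTop]
      fun t => Real.exp (-(-Real.log r) * t) := by
    refine IsBigO.of_bound (r : ℝ)⁻¹ ?_
    filter_upwards [eventually_ge_atTop 0] with t ht
    rw [mul_one, Real.norm_of_nonneg (by positivity), Real.norm_of_nonneg (Real.exp_pos _).le,
      neg_neg]
    have hlog := Real.log_neg hr0 hrlt1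
    calc (r : ℝ) ^ ⌊t⌋₊ = Real.exp (⌊t⌋₊ * Real.log r) := by
          rw [Real.exp_nat_mul, Real.exp_log hr0]
      _ ≤ Real.exp (-Real.log r + Real.log r * t) :=
          Real.exp_le_exp.2 (by nlinarith [Nat.lt_floor_add_one t])
      _ = (r : ℝ)⁻¹ * Real.exp (Real.log r * t) := by
          rw [Real.exp_add, Real.exp_neg, Real.exp_log hr0]
  refine ((hpow.mul hfract).trans hgeom).congr_left fun t => ?_
  rw [← exp_natCast_add_smul]
  push_cast
  ring_nf

end BanachAlgebra

namespace Matrix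

open scoped Matrix.Norms.Operator

variable {m n : Type*}

section Spectrum

variable [Fintype n] [DecidableEq n]

theorem exp_mulVec_of_mulVec_eq_smul {𝕂 : Type*} [RCLike 𝕂] {M : Matrix n n 𝕂} {μ : 𝕂}
    {v : n → 𝕂} (h : M *ᵥ v = μ • v) : exp M *ᵥ v = exp μ • v := by
  let X : Matrix n n 𝕂 := of fun i _ => v i
  have hX : SemiconjBy X (algebraMap 𝕂 _ μ) M := by
    ext i j
    simpa [X, mul_apply, algebraMap_matrix_apply, mul_comm, mulVec, dotProduct] using
      (congrFun h i).symm
  have hexp : X * algebraMap 𝕂 _ (exp μ) = exp M * X := by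
    rw [algebraMap_exp_comm]
    exact hX.exp_right
  funext i
  have hi := congrFun (congrFun hexp i) i
  simp only [X, mul_apply, algebraMap_matrix_apply, of_apply, mul_ite, mul_zero,
    Finset.sum_ite_eq', Finset.mem_univ, if_true] at hi
  simpa [mulVec, dotProduct, mul_comm] using hi.symm

theorem spectrum_exp_subset (M : Matrix n n ℂ) :
    spectrum ℂ (exp M) ⊆ Complex.exp '' spectrum ℂ M := by
  intro z hz
  rw [← AlgEquiv.spectrum_eq toLinAlgEquiv', ← Module.End.hasEigenvalue_iff_mem_spectrum] at hz
  have hcomm : Commute (toLinAlgEquiv' M) (toLinAlgEquiv' (exp M)) :=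
    (Commute.refl M).exp_right.map _
  obtain ⟨μ, v, hM, hexpM⟩ := Module.End.exists_hasEigenvector_of_commute hcomm hz
  have hμ : μ ∈ spectrum ℂ M := by
    rw [← AlgEquiv.spectrum_eq toLinAlgEquiv', ← Module.End.hasEigenvalue_iff_mem_spectrum]
    exact Module.End.hasEigenvalue_of_hasEigenvector hM
  refine ⟨μ, hμ, smul_left_injective ℂ hM.2 (?_ : Complex.exp μ • v = z • v)⟩
  rw [Complex.exp_eq_exp_ℂ, ← exp_mulVec_of_mulVec_eq_smul hM.apply_eq_smul]
  exact hexpM.apply_eq_smul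

end Spectrum

section Decay

variable [Fintype m] [Fintype n]

theorem linfty_opNorm_map_eq {α β : Type*} [SeminormedAddCommGroup α]
    [SeminormedAddCommGroup β] (M : Matrix m n α) (f : α → β) (hf : ∀ a, ‖f a‖ = ‖a‖) :
    ‖M.map f‖ = ‖M‖ := by
  have hf' : ∀ a, ‖f a‖₊ = ‖a‖₊ := fun a => NNReal.eq (hf a)
  simp [linfty_opNorm_def, hf']

variable [DecidableEq n]

theorem spectralRadius_exp_lt_one {M : Matrix n n ℂ} (hM : ∀ μ ∈ spectrum ℂ M, μ.re < 0) :
    spectralRadius ℂ (exp M) < 1 := by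
  rcases (spectrum ℂ (exp M)).eq_empty_or_nonempty with hempty | hne
  · simp [spectralRadius, hempty]
  · refine spectrum.spectralRadius_lt_of_forall_lt_of_nonempty hne fun z hz => ?_
    obtain ⟨μ, hμ, rfl⟩ := spectrum_exp_subset M hz
    rw [← NNReal.coe_lt_coe, coe_nnnorm, Complex.norm_exp, NNReal.coe_one, Real.exp_lt_one_iff]
    exact hM μ hμ

theorem exists_isBigO_exp_smul {A : Matrix n n ℝ}
    (hA : ∀ μ ∈ spectrum ℂ (A.map Complex.ofReal), μ.re < 0) :
    ∃ ε > 0, (fun t : ℝ => exp (t • A)) =O[atTop] fun t => Real.exp (-ε * t) := by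
  have hexp := spectralRadius_exp_lt_one hA
  obtain ⟨ε, hε, hO⟩ :=
    isBigO_exp_smul_of_spectralRadius_exp_lt_one (a := A.map Complex.ofReal) hexp
  refine ⟨ε, hε, ?_⟩
  rw [← isBigO_norm_left] at hO ⊢
  refine hO.congr_left fun t => ?_
  have hcont : Continuous (Complex.ofRealHom.mapMatrix : Matrix n n ℝ →+* Matrix n n ℂ) :=
    continuous_id.matrix_map Complex.continuous_ofReal
  have hmap : (t • A).map Complex.ofReal = (t : ℂ) • A.map Complex.ofReal := by
    ext i j
    simp
  rw [← linfty_opNorm_map_eq (exp (t • A)) _ Complex.norm_real, ← hmap]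
  exact congrArg norm (map_exp _ hcont (t • A)).symm

end Decay

section Entrywise

variable [Fintype m] [Fintype n]

theorem hasDerivAt_apply {F : ℝ → Matrix m n ℝ} {F' : Matrix m n ℝ} {t : ℝ}
    (h : HasDerivAt F F' t) (i : m) (j : n) : HasDerivAt (fun s => F s i j) (F' i j) t :=
  (entryLinearMap ℝ ℝ i j).toContinuousLinearMap.hasFDerivAt.comp_hasDerivAt t h

variable {F : ℝ → Matrix m n ℝ} {ε : ℝ}

theorem integrableOn_Ioi_apply_of_isBigO (hε : 0 < ε) (hF : Continuous F)
    (hO : F =O[atTop] fun t => Real.exp (-ε * t)) (a : ℝ) (i : m) (j : n) :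
    IntegrableOn (fun t => F t i j) (Ioi a) :=
  integrable_of_isBigO_exp_neg hε (hF.matrix_elem i j).continuousOn
    (((entryLinearMap ℝ ℝ i j).toContinuousLinearMap.isBigO_comp F atTop).trans hO)

theorem tendsto_apply_of_isBigO (hε : 0 < ε) (hO : F =O[atTop] fun t => Real.exp (-ε * t))
    (i : m) (j : n) : Tendsto (fun t => F t i j) atTop (𝓝 0) :=
  (((entryLinearMap ℝ ℝ i j).toContinuousLinearMap.isBigO_comp F atTop).trans hO).trans_tendsto
    (Real.tendsto_exp_atBot.comp (tendsto_id.const_mul_atTop_of_neg (neg_neg_of_pos hε)))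

end Entrywise

section Integral

variable [Fintype m] {l α : Type*} [MeasurableSpace α] {μ : Measure α}

theorem integrable_mul_apply {F : α → Matrix m n ℝ} (A : Matrix l m ℝ)
    (hF : ∀ i j, Integrable (fun t => F t i j) μ) (i : l) (j : n) :
    Integrable (fun t => (A * F t) i j) μ := by
  simp only [mul_apply]
  exact integrable_finsetSum _ fun k _ => (hF k j).const_mul _

theorem integrable_apply_mul {F : α → Matrix l m ℝ} (A : Matrix m n ℝ)
    (hF : ∀ i j, Integrable (fun t => F t i j) μ) (i : l) (j : n) :
    Integrable (fun t => (F t * A) i j) μ := by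
  simp only [mul_apply]
  exact integrable_finsetSum _ fun k _ => (hF i k).mul_const _

theorem mul_of_integral {F : α → Matrix m n ℝ} (A : Matrix l m ℝ)
    (hF : ∀ i j, Integrable (fun t => F t i j) μ) :
    A * of (fun i j => ∫ t, F t i j ∂μ) = of fun i j => ∫ t, (A * F t) i j ∂μ := by
  ext i j
  simp only [mul_apply, of_apply]
  rw [integral_finsetSum _ fun k _ => (hF k j).const_mul _]
  simp only [integral_const_mul]

theorem of_integral_mul {F : α → Matrix l m ℝ} (A : Matrix m n ℝ)
    (hF : ∀ i j, Integrable (fun t => F t i j) μ) :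
    of (fun i j => ∫ t, F t i j ∂μ) * A = of fun i j => ∫ t, (F t * A) i j ∂μ := by
  ext i j
  simp only [mul_apply, of_apply]
  rw [integral_finsetSum _ fun k _ => (hF i k).mul_const _]
  simp only [integral_mul_const]

end Integral

end Matrix

section GramianIntegrand

open scoped Matrix.Norms.Operator

variable {n m : Type*} [Fintype n] [DecidableEq n] [Fintype m]
  (A : Matrix n n ℝ) (B : Matrix n m ℝ)

noncomputable def gramianIntegrand (t : ℝ) : Matrix n n ℝ :=
  exp (t • A) * B * Bᵀ * exp (t • Aᵀ)

theorem gramianIntegrand_eq (t : ℝ) :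
    gramianIntegrand A B t = exp (t • A) * (B * Bᵀ * exp (t • Aᵀ)) := by
  simp only [gramianIntegrand, Matrix.mul_assoc]

theorem gramianIntegrand_zero : gramianIntegrand A B 0 = B * Bᵀ := by
  simp [gramianIntegrand]

theorem hasDerivAt_gramianIntegrand (t : ℝ) :
    HasDerivAt (gramianIntegrand A B)
      (A * gramianIntegrand A B t + gramianIntegrand A B t * Aᵀ) t := by
  have hderiv : A * exp (t • A) * (B * Bᵀ * exp (t • Aᵀ))
      + exp (t • A) * (B * Bᵀ * (exp (t • Aᵀ) * Aᵀ))
      = A * gramianIntegrand A B t + gramianIntegrand A B t * Aᵀ := by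
    simp only [gramianIntegrand_eq, Matrix.mul_assoc]
  rw [← hderiv, funext (gramianIntegrand_eq A B)]
  exact (hasDerivAt_exp_smul_const' A t).mul
    ((hasDerivAt_exp_smul_const Aᵀ t).const_mul (B * Bᵀ))

theorem continuous_gramianIntegrand : Continuous (gramianIntegrand A B) :=
  continuous_iff_continuousAt.2 fun t => (hasDerivAt_gramianIntegrand A B t).continuousAt

theorem exists_isBigO_gramianIntegrand
    (hA : ∀ μ ∈ spectrum ℂ (A.map Complex.ofReal), μ.re < 0) :
    ∃ ε > 0, gramianIntegrand A B =O[atTop] fun t => Real.exp (-ε * t) := by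
  obtain ⟨ε, hε, hO⟩ := Matrix.exists_isBigO_exp_smul hA
  have hOT : (fun t : ℝ => exp (t • Aᵀ)) =O[atTop] fun t => Real.exp (-ε * t) := by
    refine (((Matrix.transposeLinearEquiv n n ℝ ℝ).toLinearMap.toContinuousLinearMap.isBigO_comp
      _ atTop).trans hO).congr_left fun t => ?_
    change (exp (t • A))ᵀ = exp (t • Aᵀ)
    rw [← Matrix.transpose_smul, Matrix.exp_transpose]
  refine ⟨2 * ε, by positivity, (hO.mul (hOT.const_mul_left (B * Bᵀ))).congr
    (fun t => (gramianIntegrand_eq A B t).symm) fun t => ?_⟩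
  rw [← Real.exp_add]
  ring_nf

end GramianIntegrand

/-- For a Hurwitz matrix `A`, the integral defining the Gramian
`R = ∫₀^∞ e^{tA} B Bᵀ e^{tAᵀ} dt` converges (entrywise), and `R` satisfies the
Lyapunov equation `A R + R Aᵀ = −B Bᵀ`. -/
theorem gramian_integrable_and_lyapunov {d m : ℕ}
    (A : Matrix (Fin d) (Fin d) ℝ) (B : Matrix (Fin d) (Fin m) ℝ)
    (hA : ∀ μ ∈ spectrum ℂ (A.map Complex.ofReal), μ.re < 0) :
    (∀ i j, IntegrableOn
        (fun t : ℝ =>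
          (NormedSpace.exp (t • A) * B * Bᵀ * NormedSpace.exp (t • Aᵀ)) i j)
        (Set.Ioi 0))
    ∧ A * gramian A B + gramian A B * Aᵀ = -(B * Bᵀ) := by
  obtain ⟨ε, hε, hO⟩ := exists_isBigO_gramianIntegrand A B hA
  have hG : ∀ i j, IntegrableOn (fun t => gramianIntegrand A B t i j) (Ioi 0) :=
    Matrix.integrableOn_Ioi_apply_of_isBigO hε (continuous_gramianIntegrand A B) hO 0
  refine ⟨hG, ?_⟩
  change A * Matrix.of (fun i j => ∫ t in Ioi 0, gramianIntegrand A B t i j)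
    + Matrix.of (fun i j => ∫ t in Ioi 0, gramianIntegrand A B t i j) * Aᵀ = _
  rw [Matrix.mul_of_integral A hG, Matrix.of_integral_mul Aᵀ hG]
  ext i j
  have hAG := Matrix.integrable_mul_apply A hG i j
  have hGA := Matrix.integrable_apply_mul Aᵀ hG i j
  have hFTC := integral_Ioi_of_hasDerivAt_of_tendsto'
    (fun t _ => Matrix.hasDerivAt_apply (hasDerivAt_gramianIntegrand A B t) i j)
    (hAG.add hGA) (Matrix.tendsto_apply_of_isBigO hε hO i j)
  simp only [Matrix.add_apply, gramianIntegrand_zero, zero_sub] at hFTC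
  rw [Matrix.add_apply, Matrix.of_apply, Matrix.of_apply, ← integral_add hAG hGA, hFTC,
    Matrix.neg_apply]
end

section
/- Let χ > 0, ζ₁ > 0, ν ∈ ℝ and ω ∈ ℝ. Let A = [[0, 1], [−χ², −2ζ₁]] (a 2×2 matrix, which is Hurwitz), B = (0, ν)ᵀ ∈ ℝ^{2×1}, R = ∫₀^∞ e^{tA} B Bᵀ e^{tAᵀ} dt, and α = (0,1)ᵀ ∈ ℝ². Then π ⟨α, Ŝ_A(ω) R α⟩ = ω²ν² / (2[(χ² − ω²)² + 4ζ₁²ω²]). -/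
/-!
Write `p`, `q` for the `(0,1)` and `(1,1)` entries of `e^{tA}`. They solve `p' = q`,
`q' = -χ² p - 2ζ₁ q`, `p 0 = 0`, `q 0 = 1`, and since `B Bᵀ` has the single nonzero entry `ν²`
at `(1,1)`, the left side is `π ν² (Ŝ₁₀ ∫ p q + Ŝ₁₁ ∫ q²)`. Three integrations by parts
finish the job: `p q = (p²/2)'` gives `∫ p q = 0`; the energy identity
`(q² + χ² p²)' = -4ζ₁ q²` gives `∫ q² = 1/(4ζ₁)`; and integrating the ODE against `e^{iωt}`
gives `(χ² - ω² - 2iζ₁ω) ∫ e^{iωt} q = -iω`, whose real part yields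
`π Ŝ₁₁ = ∫ cos(ωt) q = 2ζ₁ω² / ((χ² - ω²)² + 4ζ₁²ω²)`.
The boundary terms at infinity vanish because `p` and `q` decay exponentially, as the
Lyapunov function `χ² p² + q² + ε p q` shows for a small weight `ε > 0`.
-/

open MeasureTheory
open scoped Matrix

/-- The matrix-valued cosine transform `Ŝ_A(ω) = (1/π)∫₀^∞ e^{tA} cos ωt dt`,
defined entrywise. -/
noncomputable def cosTransform {d : ℕ} (A : Matrix (Fin d) (Fin d) ℝ) (ω : ℝ) :
    Matrix (Fin d) (Fin d) ℝ :=
  Matrix.of fun i j => (1 / Real.pi) * ∫ t in Set.Ioi (0 : ℝ),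
    Real.cos (ω * t) * (NormedSpace.exp (t • A)) i j

open Asymptotics Filter NormedSpace Set Topology

section ExpDecay

variable {E : Type*} [NormedAddCommGroup E] {r : ℝ} {f : ℝ → E}

lemma integrableOn_Ioi_of_isBigO_exp_neg (hr : 0 < r) (hf : Continuous f)
    (ho : f =O[atTop] fun t => Real.exp (-r * t)) : IntegrableOn f (Ioi 0) :=
  (integrable_norm_iff hf.aestronglyMeasurable.restrict).mp <|
    integrable_of_isBigO_exp_neg hr hf.norm.continuousOn ho.norm_left

lemma tendsto_zero_of_isBigO_exp_neg (hr : 0 < r)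
    (ho : f =O[atTop] fun t => Real.exp (-r * t)) : Tendsto f atTop (𝓝 0) :=
  ho.trans_tendsto <| Real.tendsto_exp_atBot.comp <|
    tendsto_id.const_mul_atTop_of_neg (neg_lt_zero.mpr hr)

lemma integral_Ioi_eq_neg_of_hasDerivAt_of_isBigO [NormedSpace ℝ E] [CompleteSpace E]
    {f' : ℝ → E} (hr : 0 < r) (hf : ∀ t, HasDerivAt f (f' t) t) (hf' : Continuous f')
    (hfo : f =O[atTop] fun t => Real.exp (-r * t))
    (hf'o : f' =O[atTop] fun t => Real.exp (-r * t)) :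
    ∫ t in Ioi 0, f' t = -f 0 := by
  rw [integral_Ioi_of_hasDerivAt_of_tendsto' (fun t _ => hf t)
    (integrableOn_Ioi_of_isBigO_exp_neg hr hf' hf'o) (tendsto_zero_of_isBigO_exp_neg hr hfo),
    zero_sub]

lemma Asymptotics.IsBigO.mul_of_exp_neg {R : Type*} [SeminormedRing R] {g h : ℝ → R}
    (hr : 0 < r) (hg : g =O[atTop] fun t => Real.exp (-r * t))
    (hh : h =O[atTop] fun t => Real.exp (-r * t)) :
    (fun t => g t * h t) =O[atTop] fun t => Real.exp (-r * t) := by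
  simpa using (hg.mul hh).trans ((isBigO_refl (fun t => Real.exp (-r * t)) atTop).mul
    ((tendsto_zero_of_isBigO_exp_neg hr (isBigO_refl _ _)).isBigO_one ℝ))

end ExpDecay

section FourierLaplace

open Complex

lemma isBigO_exp_ofReal_mul_I_mul (ω : ℝ) (g : ℝ → ℂ) (l : Filter ℝ) :
    (fun t => cexp (↑(ω * t) * I) * g t) =O[l] g :=
  isBigO_of_le _ fun t => by rw [norm_mul, norm_exp_ofReal_mul_I, one_mul]

variable {r : ℝ} {f f' : ℝ → ℂ}

lemma integrableOn_exp_ofReal_mul_I_mul (ω : ℝ) (hr : 0 < r) (hf : Continuous f)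
    (hfo : f =O[atTop] fun t => Real.exp (-r * t)) :
    IntegrableOn (fun t => cexp (↑(ω * t) * I) * f t) (Ioi 0) :=
  integrableOn_Ioi_of_isBigO_exp_neg hr (by fun_prop)
    ((isBigO_exp_ofReal_mul_I_mul ω f atTop).trans hfo)

lemma integral_exp_mul_I_mul_deriv (ω : ℝ) (hr : 0 < r)
    (hf : ∀ t, HasDerivAt f (f' t) t) (hf' : Continuous f')
    (hfo : f =O[atTop] fun t => Real.exp (-r * t))
    (hf'o : f' =O[atTop] fun t => Real.exp (-r * t)) :
    ∫ t in Ioi 0, cexp (↑(ω * t) * I) * f' t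
      = -f 0 - ω * I * ∫ t in Ioi 0, cexp (↑(ω * t) * I) * f t := by
  have hfc : Continuous f := continuous_iff_continuousAt.2 fun t => (hf t).continuousAt
  have hwave : ∀ t,
      HasDerivAt (fun t => cexp (↑(ω * t) * I)) (cexp (↑(ω * t) * I) * (ω * I)) t :=
    fun t => by simpa using (((hasDerivAt_id t).const_mul ω).ofReal_comp.mul_const I).cexp
  have hefo := (isBigO_exp_ofReal_mul_I_mul ω f atTop).trans hfo
  have key := integral_Ioi_eq_neg_of_hasDerivAt_of_isBigO hr
    (fun t => ((hwave t).mul (hf t)).congr_deriv (by ring :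
      _ = ω * I * (cexp (↑(ω * t) * I) * f t) + cexp (↑(ω * t) * I) * f' t))
    (by fun_prop) hefo
    ((hefo.const_mul_left (ω * I)).add ((isBigO_exp_ofReal_mul_I_mul ω f' atTop).trans hf'o))
  rw [integral_add ((integrableOn_exp_ofReal_mul_I_mul ω hr hfc hfo).const_mul _)
    (integrableOn_exp_ofReal_mul_I_mul ω hr hf' hf'o), integral_const_mul] at key
  rw [eq_sub_iff_add_eq, add_comm, key]
  simp

end FourierLaplace

lemma le_mul_exp_neg_of_hasDerivAt_le {V V' : ℝ → ℝ} {κ t : ℝ}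
    (hV : ∀ t, HasDerivAt V (V' t) t) (hdiss : ∀ t, V' t ≤ -κ * V t) (ht : 0 ≤ t) :
    V t ≤ V 0 * Real.exp (-κ * t) := by
  have hanti : Antitone fun t => V t * Real.exp (κ * t) := by
    refine antitone_of_hasDerivAt_nonpos
      (fun t => (hV t).mul ((hasDerivAt_id t).const_mul κ).exp) ?_
    intro t
    show V' t * Real.exp (κ * t) + V t * (Real.exp (κ * t) * (κ * 1)) ≤ 0
    nlinarith [hdiss t, Real.exp_pos (κ * t)]
  have h := hanti ht
  simp only [mul_zero, Real.exp_zero, mul_one] at h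
  rw [← le_div_iff₀ (Real.exp_pos _), div_eq_mul_inv, ← Real.exp_neg] at h
  simpa [neg_mul] using h

section DampedOscillator

variable {χ ζ ε : ℝ} {p q : ℝ → ℝ}

lemma exists_energy_cross_weight (hχ : 0 < χ) (hζ : 0 < ζ) :
    ∃ ε : ℝ, 0 < ε ∧ ε ≤ ζ ∧ ε * ζ ≤ χ ^ 2 ∧ ε ≤ χ := by
  have hden : 0 < χ ^ 2 + ζ ^ 2 := by positivity
  refine ⟨ζ * χ ^ 2 / (χ ^ 2 + ζ ^ 2), by positivity, ?_, ?_, ?_⟩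
  · rw [div_le_iff₀ hden]; nlinarith [sq_nonneg ζ, sq_nonneg χ]
  · rw [div_mul_eq_mul_div, div_le_iff₀ hden]; nlinarith [sq_nonneg (ζ * χ)]
  · rw [div_le_iff₀ hden]; nlinarith [sq_nonneg (ζ - χ), mul_pos hχ hζ]

/-- Along `p' = q`, `q' = -χ² p - 2ζ q`, the energy `V = χ² p² + q² + ε p q` satisfies
`V' ≤ -(ε/2) V`: the difference is a quadratic form in `(p, q)` with nonpositive
discriminant. -/
lemma damped_energy_deriv_le (hε : 0 < ε) (hεζ : ε ≤ ζ) (hεχ : ε * ζ ≤ χ ^ 2) (a b : ℝ) :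
    χ ^ 2 * (2 * a * b) + 2 * b * (-χ ^ 2 * a - 2 * ζ * b)
        + ε * (b * b + a * (-χ ^ 2 * a - 2 * ζ * b))
      ≤ -(ε / 2) * (χ ^ 2 * a ^ 2 + b ^ 2 + ε * a * b) := by
  have hζ' : 0 < ζ := hε.trans_le hεζ
  have hX : 0 < 4 * ζ - 3 * ε / 2 := by linarith
  have hdisc : (ε * (2 * ζ - ε / 2)) ^ 2 ≤ 4 * (4 * ζ - 3 * ε / 2) * (ε * χ ^ 2 / 2) := by
    calc (ε * (2 * ζ - ε / 2)) ^ 2 ≤ ε ^ 2 * (4 * ζ ^ 2) := by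
          rw [mul_pow]; gcongr; nlinarith
      _ = 4 * ε * ζ * (ε * ζ) := by ring
      _ ≤ 4 * ε * ζ * χ ^ 2 := by gcongr
      _ ≤ 4 * (4 * ζ - 3 * ε / 2) * (ε * χ ^ 2 / 2) := by
          nlinarith [mul_nonneg (mul_nonneg hε.le (sq_nonneg χ))
            (by linarith : (0 : ℝ) ≤ 4 * ζ - 3 * ε)]
  nlinarith [sq_nonneg (2 * (4 * ζ - 3 * ε / 2) * b + ε * (2 * ζ - ε / 2) * a),
    mul_nonneg (sub_nonneg.mpr hdisc) (sq_nonneg a)]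

lemma exists_isBigO_exp_neg_of_damped (hχ : 0 < χ) (hζ : 0 < ζ)
    (hp : ∀ t, HasDerivAt p (q t) t) (hq : ∀ t, HasDerivAt q (-χ ^ 2 * p t - 2 * ζ * q t) t) :
    ∃ r > 0, (p =O[atTop] fun t => Real.exp (-r * t)) ∧
      q =O[atTop] fun t => Real.exp (-r * t) := by
  obtain ⟨ε, hε, hεζ, hεζχ, hεχ⟩ := exists_energy_cross_weight hχ hζ
  set V : ℝ → ℝ := fun t => χ ^ 2 * p t ^ 2 + q t ^ 2 + ε * p t * q t
  have hV : ∀ t, HasDerivAt V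
      (χ ^ 2 * (2 * p t * q t) + 2 * q t * (-χ ^ 2 * p t - 2 * ζ * q t)
        + ε * (q t * q t + p t * (-χ ^ 2 * p t - 2 * ζ * q t))) t := fun t => by
    refine (((((hp t).pow 2).const_mul (χ ^ 2)).add ((hq t).pow 2)).add
      (((hp t).const_mul ε).mul (hq t))).congr_deriv ?_
    push_cast; ring
  have hV_le : ∀ t, 0 ≤ t → V t ≤ V 0 * Real.exp (-(ε / 2) * t) := fun t =>
    le_mul_exp_neg_of_hasDerivAt_le hV fun t => damped_energy_deriv_le hε hεζ hεζχ (p t) (q t)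
  -- the cross term `ε p q` is dominated because `ε ≤ χ`
  have hV_ge : ∀ t, χ ^ 2 * p t ^ 2 + q t ^ 2 ≤ 2 * V t := fun t => by
    nlinarith [sq_nonneg (χ * p t + q t), sq_nonneg (χ * p t - q t),
      mul_nonneg (sub_nonneg.2 hεχ) (sq_nonneg (p t + q t)),
      mul_nonneg (sub_nonneg.2 hεχ) (sq_nonneg (p t - q t))]
  have hsq : ∀ t, Real.exp (-(ε / 4) * t) ^ 2 = Real.exp (-(ε / 2) * t) := fun t => by
    rw [sq, ← Real.exp_add]; congr 1; ring
  refine ⟨ε / 4, by positivity, IsBigO.of_pow two_ne_zero ?_, IsBigO.of_pow two_ne_zero ?_⟩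
  · refine IsBigO.of_bound (2 * V 0 / χ ^ 2) ?_
    filter_upwards [eventually_ge_atTop 0] with t ht
    simp only [Pi.pow_apply, Real.norm_eq_abs, abs_sq, hsq, Real.abs_exp]
    rw [div_mul_eq_mul_div, le_div_iff₀ (by positivity)]
    nlinarith [hV_le t ht, hV_ge t, sq_nonneg (q t)]
  · refine IsBigO.of_bound (2 * V 0) ?_
    filter_upwards [eventually_ge_atTop 0] with t ht
    simp only [Pi.pow_apply, Real.norm_eq_abs, abs_sq, hsq, Real.abs_exp]
    nlinarith [hV_le t ht, hV_ge t, sq_nonneg (p t), sq_nonneg χ]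

lemma integral_mul_of_damped (hχ : 0 < χ) (hζ : 0 < ζ)
    (hp : ∀ t, HasDerivAt p (q t) t) (hq : ∀ t, HasDerivAt q (-χ ^ 2 * p t - 2 * ζ * q t) t) :
    ∫ t in Ioi 0, p t * q t = -(p 0 ^ 2 / 2) := by
  obtain ⟨r, hr, hpo, hqo⟩ := exists_isBigO_exp_neg_of_damped hχ hζ hp hq
  have hpc : Continuous p := continuous_iff_continuousAt.2 fun t => (hp t).continuousAt
  have hqc : Continuous q := continuous_iff_continuousAt.2 fun t => (hq t).continuousAt
  exact integral_Ioi_eq_neg_of_hasDerivAt_of_isBigO (f := fun t => p t ^ 2 / 2) hr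
    (fun t => (((hp t).pow 2).div_const 2).congr_deriv (by push_cast; ring)) (by fun_prop)
    (((hpo.mul_of_exp_neg hr hpo).const_mul_left (1 / 2)).congr_left fun t => by ring)
    (hpo.mul_of_exp_neg hr hqo)

lemma integral_sq_of_damped (hχ : 0 < χ) (hζ : 0 < ζ)
    (hp : ∀ t, HasDerivAt p (q t) t) (hq : ∀ t, HasDerivAt q (-χ ^ 2 * p t - 2 * ζ * q t) t) :
    ∫ t in Ioi 0, q t ^ 2 = (q 0 ^ 2 + χ ^ 2 * p 0 ^ 2) / (4 * ζ) := by
  obtain ⟨r, hr, hpo, hqo⟩ := exists_isBigO_exp_neg_of_damped hχ hζ hp hq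
  have hqc : Continuous q := continuous_iff_continuousAt.2 fun t => (hq t).continuousAt
  have hpp := hpo.mul_of_exp_neg hr hpo
  have hqq := hqo.mul_of_exp_neg hr hqo
  have key := integral_Ioi_eq_neg_of_hasDerivAt_of_isBigO
    (f := fun t => (q t ^ 2 + χ ^ 2 * p t ^ 2) / 2) hr
    (fun t => ((((hq t).pow 2).add (((hp t).pow 2).const_mul (χ ^ 2))).div_const 2).congr_deriv
      (by push_cast; ring : _ = -(2 * ζ) * q t ^ 2)) (by fun_prop)
    (((hqq.add (hpp.const_mul_left (χ ^ 2))).const_mul_left (1 / 2)).congr_left fun t => by ring)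
    ((hqq.const_mul_left (-(2 * ζ))).congr_left fun t => by ring)
  rw [integral_const_mul] at key
  field_simp
  linarith

open Complex in
lemma integral_exp_mul_I_mul_of_damped (hχ : 0 < χ) (hζ : 0 < ζ)
    (hp : ∀ t, HasDerivAt p (q t) t) (hq : ∀ t, HasDerivAt q (-χ ^ 2 * p t - 2 * ζ * q t) t)
    (ω : ℝ) :
    (((χ ^ 2 - ω ^ 2 : ℝ) : ℂ) - (2 * ζ * ω : ℝ) * I)
        * ∫ t in Ioi 0, cexp (↑(ω * t) * I) * q t
      = -(χ ^ 2 * p 0) - ω * I * q 0 := by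
  obtain ⟨r, hr, hpo, hqo⟩ := exists_isBigO_exp_neg_of_damped hχ hζ hp hq
  have hpc : Continuous p := continuous_iff_continuousAt.2 fun t => (hp t).continuousAt
  have hqc : Continuous q := continuous_iff_continuousAt.2 fun t => (hq t).continuousAt
  have hpo' := isBigO_ofReal_left.mpr hpo
  have hqo' := isBigO_ofReal_left.mpr hqo
  set P := ∫ t in Ioi 0, cexp (↑(ω * t) * I) * p t
  set Q := ∫ t in Ioi 0, cexp (↑(ω * t) * I) * q t
  have hP : Q = -p 0 - ω * I * P :=
    integral_exp_mul_I_mul_deriv ω hr (fun t => (hp t).ofReal_comp) (by fun_prop) hpo' hqo'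
  have hQ : -χ ^ 2 * P - 2 * ζ * Q = -q 0 - ω * I * Q := by
    rw [← integral_exp_mul_I_mul_deriv ω hr (fun t => (hq t).ofReal_comp) (by fun_prop) hqo'
      (isBigO_ofReal_left.mpr ((hpo.const_mul_left _).sub (hqo.const_mul_left _))),
      ← integral_const_mul, ← integral_const_mul,
      ← integral_sub ((integrableOn_exp_ofReal_mul_I_mul ω hr (by fun_prop) hpo').const_mul _)
        ((integrableOn_exp_ofReal_mul_I_mul ω hr (by fun_prop) hqo').const_mul _)]
    congr 1 with t
    push_cast; ring
  push_cast
  linear_combination (χ ^ 2 : ℂ) * hP + ω * I * hQ - ω ^ 2 * Q * I_sq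

open Complex in
lemma integral_cos_mul_of_damped (hχ : 0 < χ) (hζ : 0 < ζ)
    (hp : ∀ t, HasDerivAt p (q t) t) (hq : ∀ t, HasDerivAt q (-χ ^ 2 * p t - 2 * ζ * q t) t)
    (hp0 : p 0 = 0) (hq0 : q 0 = 1) (ω : ℝ) :
    ∫ t in Ioi 0, Real.cos (ω * t) * q t
      = 2 * ζ * ω ^ 2 / ((χ ^ 2 - ω ^ 2) ^ 2 + 4 * ζ ^ 2 * ω ^ 2) := by
  obtain ⟨r, hr, -, hqo⟩ := exists_isBigO_exp_neg_of_damped hχ hζ hp hq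
  have hqc : Continuous q := continuous_iff_continuousAt.2 fun t => (hq t).continuousAt
  have hre : ∫ t in Ioi 0, Real.cos (ω * t) * q t
      = (∫ t in Ioi 0, cexp (↑(ω * t) * I) * q t).re := by
    rw [← RCLike.re_to_complex, ← integral_re
      (integrableOn_exp_ofReal_mul_I_mul ω hr (by fun_prop) (isBigO_ofReal_left.mpr hqo))]
    congr 1 with t
    rw [RCLike.re_to_complex, re_mul_ofReal, exp_ofReal_mul_I_re]
  have hsys := integral_exp_mul_I_mul_of_damped hχ hζ hp hq ω
  rw [hp0, hq0] at hsys
  have hsys_re := congrArg re hsys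
  have hsys_im := congrArg im hsys
  simp only [mul_re, mul_im, sub_re, sub_im, neg_re, neg_im, ofReal_re, ofReal_im, I_re, I_im]
    at hsys_re hsys_im
  have hD : 0 < (χ ^ 2 - ω ^ 2) ^ 2 + 4 * ζ ^ 2 * ω ^ 2 := by
    rcases eq_or_ne ω 0 with rfl | hω
    · simp; positivity
    · positivity
  rw [hre, eq_div_iff hD.ne']
  linear_combination (χ ^ 2 - ω ^ 2) * hsys_re - 2 * ζ * ω * hsys_im

lemma Matrix.hasDerivAt_exp_smul_apply {n : Type*} [Fintype n] [DecidableEq n]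
    (A : Matrix n n ℝ) (i j : n) (t : ℝ) :
    HasDerivAt (fun u : ℝ => exp (u • A) i j) ((A * exp (t • A)) i j) t := by
  -- any norm inducing the product topology will do; the statement itself involves none
  let : NormedRing (Matrix n n ℝ) := Matrix.linftyOpNormedRing
  let : NormedAlgebra ℝ (Matrix n n ℝ) := Matrix.linftyOpNormedAlgebra
  exact (Matrix.entryLinearMap ℝ ℝ i j).toContinuousLinearMap.hasFDerivAt.comp_hasDerivAt t
    (hasDerivAt_exp_smul_const' A t)

lemma gramian_apply {d m : ℕ} (A : Matrix (Fin d) (Fin d) ℝ) (B : Matrix (Fin d) (Fin m) ℝ)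
    (i j : Fin d) :
    gramian A B i j
      = ∫ t in Ioi (0 : ℝ), ∑ k, (exp (t • A) * B) i k * (exp (t • A) * B) j k := by
  refine congrArg (integral _) (funext fun t => ?_)
  rw [← Matrix.transpose_smul, Matrix.exp_transpose, Matrix.mul_assoc (exp (t • A) * B),
    ← Matrix.transpose_mul, Matrix.mul_apply]
  rfl

lemma hasDerivAt_exp_smul_companion (χ ζ t : ℝ) :
    HasDerivAt (fun u : ℝ => exp (u • !![0, 1; -χ ^ 2, -(2 * ζ)]) 0 1)
        (exp (t • !![0, 1; -χ ^ 2, -(2 * ζ)]) 1 1) t ∧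
      HasDerivAt (fun u : ℝ => exp (u • !![0, 1; -χ ^ 2, -(2 * ζ)]) 1 1)
        (-χ ^ 2 * exp (t • !![0, 1; -χ ^ 2, -(2 * ζ)]) 0 1
          - 2 * ζ * exp (t • !![0, 1; -χ ^ 2, -(2 * ζ)]) 1 1) t := by
  refine ⟨(Matrix.hasDerivAt_exp_smul_apply _ 0 1 t).congr_deriv ?_,
    (Matrix.hasDerivAt_exp_smul_apply _ 1 1 t).congr_deriv ?_⟩ <;>
  simp [Matrix.mul_apply, Fin.sum_univ_two]
  ring

/-- For the damped linear oscillator `η̈ + 2ζ₁η̇ + χ²η = νẆ`, with companion matrix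
`A = [[0,1],[−χ²,−2ζ₁]]`, `B = (0,ν)ᵀ` and `α = (0,1)ᵀ`, one has
`π⟨α, Ŝ_A(ω)Rα⟩ = ω²ν²/(2[(χ² − ω²)² + 4ζ₁²ω²])`. -/
theorem psd_block_pendulum (χ ζ₁ ν ω : ℝ) (hχ : 0 < χ) (hζ₁ : 0 < ζ₁) :
    Real.pi *
        dotProduct (![0, 1])
          ((cosTransform (!![0, 1; -χ ^ 2, -(2 * ζ₁)]) ω).mulVec
            ((gramian (!![0, 1; -χ ^ 2, -(2 * ζ₁)]) (!![(0 : ℝ); ν])).mulVec ![0, 1]))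
      = ω ^ 2 * ν ^ 2 / (2 * ((χ ^ 2 - ω ^ 2) ^ 2 + 4 * ζ₁ ^ 2 * ω ^ 2)) := by
  set A : Matrix (Fin 2) (Fin 2) ℝ := !![0, 1; -χ ^ 2, -(2 * ζ₁)]
  have hp := fun t => (hasDerivAt_exp_smul_companion χ ζ₁ t).1
  have hq := fun t => (hasDerivAt_exp_smul_companion χ ζ₁ t).2
  have hp0 : exp ((0 : ℝ) • A) 0 1 = 0 := by simp [A]
  have hq0 : exp ((0 : ℝ) • A) 1 1 = 1 := by simp [A]
  have hR : ∀ i, gramian A !![(0 : ℝ); ν] i 1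
      = ν ^ 2 * ∫ t in Ioi (0 : ℝ), exp (t • A) i 1 * exp (t • A) 1 1 := fun i => by
    rw [gramian_apply, ← integral_const_mul]
    congr 1 with t
    simp [Matrix.mul_apply, Fin.sum_univ_two]
    ring
  simp only [dotProduct, Matrix.mulVec, Fin.sum_univ_two, Matrix.cons_val_zero,
    Matrix.cons_val_one, cosTransform, Matrix.of_apply]
  rw [hR 0, hR 1, integral_mul_of_damped hχ hζ₁ hp hq]
  simp only [← sq]
  rw [integral_sq_of_damped hχ hζ₁ hp hq, integral_cos_mul_of_damped hχ hζ₁ hp hq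
    hp0 hq0, hp0, hq0]
  field_simp
  ring
end DampedOscillator
end
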